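/- Let $A,B\in\mathbb{R}^{m\times n}$ with $\mathrm{rank}(A)+\mathrm{rank}(B)=k \le \min\{m,n\}$. Then there exist orthogonal matrices $U\in\mathcal{O}^m$ and $V\in\mathcal{O}^n$ such that $A = U\,\widetilde{\mathrm{Diag}}(\sigma(A))\,V^\top$ and $B = U\begin{bmatrix} B_1 & 0 \\ 0 & 0\end{bmatrix}V^\top$ for some $B_1\in\mathbb{R}^{k\times k}$. -/

import Mathlib

open Matrix Finset

def mdot {m n : ℕ} (A B : Matrix (Fin m) (Fin n) ℝ) : ℝ := ∑ i, ∑ j, A i j * B i j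

noncomputable def frob {m n : ℕ} (A : Matrix (Fin m) (Fin n) ℝ) : ℝ := Real.sqrt (mdot A A)

def IsOrth {k : ℕ} (R : Matrix (Fin k) (Fin k) ℝ) : Prop := Rᵀ * R = 1

def rdg (a b : ℕ) {c : ℕ} (x : Fin c → ℝ) : Matrix (Fin a) (Fin b) ℝ :=
  Matrix.of fun i j => if h : (i : ℕ) = (j : ℕ) ∧ (i : ℕ) < c then x ⟨i, h.2⟩ else 0

noncomputable def descSort {k : ℕ} (f : Fin k → ℝ) : Fin k → ℝ := fun i => f (Tuple.sort f i.rev)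

noncomputable def sigCol {a r : ℕ} (X : Matrix (Fin a) (Fin r) ℝ) : Fin r → ℝ :=
  descSort fun i => Real.sqrt ((show (Xᵀ * X).IsHermitian by
    rw [← Matrix.conjTranspose_eq_transpose_of_trivial]
    exact Matrix.isHermitian_conjTranspose_mul_self X).eigenvalues i)

noncomputable def sigRow {a b : ℕ} (X : Matrix (Fin a) (Fin b) ℝ) : Fin a → ℝ :=
  descSort fun i => Real.sqrt ((Matrix.isHermitian_mul_conjTranspose_self X).eigenvalues i)

noncomputable def toDual {m n : ℕ} (G : Matrix (Fin m) (Fin n) ℝ) :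
    Matrix (Fin m) (Fin n) ℝ →L[ℝ] ℝ :=
  LinearMap.toContinuousLinearMap
    { toFun := fun Y => mdot G Y
      map_add' := fun Y Z => by
        simp [mdot, Matrix.add_apply, mul_add, Finset.sum_add_distrib]
      map_smul' := fun c Y => by
        simp [mdot, Matrix.smul_apply, smul_eq_mul, Finset.mul_sum, mul_left_comm] }

noncomputable def enorm2 {k : ℕ} (v : Fin k → ℝ) : ℝ := Real.sqrt (∑ i, v i ^ 2)

def subdiff {m n : ℕ} (f : Matrix (Fin m) (Fin n) ℝ → ℝ) (X : Matrix (Fin m) (Fin n) ℝ) :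
    Set (Matrix (Fin m) (Fin n) ℝ) := {G | ∀ Y, f X + mdot G (Y - X) ≤ f Y}

/-!
Let `r = rank A` and let `u` be an orthonormal eigenbasis of `A Aᵀ`, sorted by decreasing
eigenvalue. Then `Aᵀ uᵢ = σᵢ wᵢ` for `i < r` with `w` orthonormal, and `Aᵀ` vanishes on the
orthogonal complement of `u₀, …, u_{r-1}`. These vectors together with the column space of `B`
span a subspace of dimension at most `r + rank B = k`, so they extend to an orthonormal basis of
`ℝᵐ` whose vectors from index `k` on are orthogonal to that subspace; likewise the `wᵢ` extend
to a basis of `ℝⁿ` with respect to the row space of `B`. In these bases `A` is the rectangular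
diagonal of its singular values and `B` vanishes outside the leading `k × k` block.
-/

open scoped RealInnerProductSpace
open Module Function

section ColumnMatrix

variable {m n : ℕ}

noncomputable abbrev colMatrix (e : OrthonormalBasis (Fin m) ℝ (EuclideanSpace ℝ (Fin m))) :
    Matrix (Fin m) (Fin m) ℝ :=
  Matrix.of fun i j => e j i

theorem isOrth_colMatrix (e : OrthonormalBasis (Fin m) ℝ (EuclideanSpace ℝ (Fin m))) :
    IsOrth (colMatrix e) := by
  have h := (EuclideanSpace.basisFun (Fin m) ℝ).toMatrix_orthonormalBasis_conjTranspose_mul_self e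
  rwa [conjTranspose_eq_transpose_of_trivial] at h

theorem colMatrix_transpose_mul_mul_apply
    (eU : OrthonormalBasis (Fin m) ℝ (EuclideanSpace ℝ (Fin m)))
    (eV : OrthonormalBasis (Fin n) ℝ (EuclideanSpace ℝ (Fin n))) (M : Matrix (Fin m) (Fin n) ℝ)
    (i : Fin m) (j : Fin n) :
    ((colMatrix eU)ᵀ * M * colMatrix eV) i j = ⟪eU i, toEuclideanLin M (eV j)⟫ := by
  simp only [mul_apply, transpose_apply, of_apply, EuclideanSpace.inner_eq_star_dotProduct,
    toLpLin_apply, star_trivial, dotProduct, mulVec, sum_mul]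
  rw [sum_comm]
  exact sum_congr rfl fun _ _ => sum_congr rfl fun _ _ => by ring

theorem inner_toEuclideanLin_transpose (M : Matrix (Fin m) (Fin n) ℝ)
    (x : EuclideanSpace ℝ (Fin m)) (y : EuclideanSpace ℝ (Fin n)) :
    ⟪toEuclideanLin Mᵀ x, y⟫ = ⟪x, toEuclideanLin M y⟫ := by
  rw [← conjTranspose_eq_transpose_of_trivial, toEuclideanLin_conjTranspose_eq_adjoint,
    LinearMap.adjoint_inner_left]

theorem eq_mul_transpose_mul_mul_mul_transpose {U : Matrix (Fin m) (Fin m) ℝ}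
    {V : Matrix (Fin n) (Fin n) ℝ} (hU : IsOrth U) (hV : IsOrth V) (M : Matrix (Fin m) (Fin n) ℝ) :
    M = U * (Uᵀ * M * V) * Vᵀ := by
  have hU' : U * Uᵀ = 1 := mul_eq_one_comm.mp hU
  have hV' : V * Vᵀ = 1 := mul_eq_one_comm.mp hV
  simp only [← Matrix.mul_assoc, hU', Matrix.one_mul]
  rw [Matrix.mul_assoc, hV', Matrix.mul_one]

theorem finrank_range_toEuclideanLin (M : Matrix (Fin m) (Fin n) ℝ) :
    finrank ℝ (LinearMap.range (toEuclideanLin M)) = M.rank := by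
  rw [toEuclideanLin_eq_toLin_orthonormal, ← rank_eq_finrank_range_toLin]

theorem finrank_span_sup_range_toEuclideanLin_le {r : ℕ} (f : Fin r → EuclideanSpace ℝ (Fin m))
    (B : Matrix (Fin m) (Fin n) ℝ) :
    finrank ℝ ↥(Submodule.span ℝ (Set.range f) ⊔ LinearMap.range (toEuclideanLin B)) ≤
      r + B.rank :=
  (Submodule.finrank_add_le_finrank_add_finrank _ _).trans <| add_le_add
    ((finrank_range_le_card f).trans (Fintype.card_fin r).le) (finrank_range_toEuclideanLin B).le

end ColumnMatrix

section Extension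

variable {E : Type*} [NormedAddCommGroup E] [InnerProductSpace ℝ E]

theorem Orthonormal.sumElim {ι κ : Type*} {f : ι → E} {g : κ → E} (hf : Orthonormal ℝ f)
    (hg : Orthonormal ℝ g) (hfg : ∀ i j, ⟪f i, g j⟫ = 0) : Orthonormal ℝ (Sum.elim f g) := by
  classical
  rw [orthonormal_iff_ite] at hf hg ⊢
  rintro (i | i) (j | j) <;> simp [hf, hg, hfg, real_inner_comm]

variable [FiniteDimensional ℝ E]

theorem Submodule.exists_orthonormal_of_le_finrank (S : Submodule ℝ E) {c : ℕ}
    (hc : c ≤ finrank ℝ S) : ∃ q : Fin c → E, Orthonormal ℝ q ∧ ∀ i, q i ∈ S :=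
  ⟨fun i => stdOrthonormalBasis ℝ S (Fin.castLE hc i),
    ((stdOrthonormalBasis ℝ S).orthonormal.comp _ (Fin.castLE_injective hc)).comp_linearIsometry
      S.subtypeₗᵢ,
    fun _ => Submodule.coe_mem _⟩

theorem exists_orthonormalBasis_extension_orthogonal {d r k : ℕ} (hd : finrank ℝ E = d)
    (hrk : r ≤ k) (hkd : k ≤ d) {w : Fin r → E} (hw : Orthonormal ℝ w) {S : Submodule ℝ E}
    (hwS : ∀ i, w i ∈ S) (hS : finrank ℝ S ≤ k) :
    ∃ e : OrthonormalBasis (Fin d) ℝ E,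
      (∀ i, e (Fin.castLE (hrk.trans hkd) i) = w i) ∧ ∀ i : Fin d, k ≤ (i : ℕ) → e i ∈ Sᗮ := by
  obtain ⟨q, hq, hqS⟩ := Sᗮ.exists_orthonormal_of_le_finrank (c := d - k)
    (by have := S.finrank_add_finrank_orthogonal; omega)
  let F := Sum.elim w q
  have hF : Orthonormal ℝ F :=
    hw.sumElim hq fun i j => Submodule.inner_right_of_mem_orthogonal (hwS i) (hqS j)
  let φ : Fin r ⊕ Fin (d - k) → Fin d :=
    Sum.elim (Fin.castLE (hrk.trans hkd)) fun j => ⟨k + j, by omega⟩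
  have hφ : Injective φ := (Fin.castLE_injective _).sumElim
    (fun i j h => by simpa [Fin.ext_iff] using h)
    (fun i j h => by simp only [Fin.ext_iff, Fin.val_castLE] at h; omega)
  have hrestrict : Orthonormal ℝ ((Set.range φ).domRestrict (extend φ F 0)) := by
    convert hF.comp _ (Equiv.ofInjective φ hφ).symm.injective
    ext ⟨_, a, rfl⟩ : 1
    simp [hφ.extend_apply]
  obtain ⟨e, he⟩ := hrestrict.exists_orthonormalBasis_extension_of_card_eq (by simp [hd])
  have heF : ∀ a, e (φ a) = F a := fun a => (he _ ⟨a, rfl⟩).trans (hφ.extend_apply _ _ a)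
  refine ⟨e, fun i => heF (.inl i), fun i hi => ?_⟩
  have hi' : φ (.inr ⟨i - k, by omega⟩) = i := Fin.ext (Nat.add_sub_cancel' hi)
  rw [← hi', heF]
  exact hqS _

end Extension

section Sorting

variable {k : ℕ}

theorem antitone_descSort (f : Fin k → ℝ) : Antitone (descSort f) :=
  fun _ _ hij => Tuple.monotone_sort f (Fin.rev_le_rev.mpr hij)

theorem descSort_comp_of_monotone {g : ℝ → ℝ} (hg : Monotone g) (f : Fin k → ℝ) :
    descSort (g ∘ f) = fun i => g (f (Tuple.sort f i.rev)) :=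
  funext fun i => congrFun (Tuple.unique_monotone (Tuple.monotone_sort (g ∘ f))
    (hg.comp (Tuple.monotone_sort f))) i.rev

theorem Fin.lt_card_subtype_iff {P : Fin k → Prop} [DecidablePred P]
    (hP : ∀ ⦃i j⦄, i ≤ j → P j → P i) (j : Fin k) :
    (j : ℕ) < Fintype.card {i // P i} ↔ P j := by
  rw [Fintype.card_subtype]
  constructor
  · intro hj
    by_contra hPj
    have hsub : ({i | P i} : Finset (Fin k)) ⊆ Iio j := fun i hi =>
      mem_Iio.2 (lt_of_not_ge fun hji => hPj (hP hji (mem_filter.1 hi).2))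
    have := card_le_card hsub
    rw [Fin.card_Iio] at this
    omega
  · intro hPj
    have hsub : Iic j ⊆ ({i | P i} : Finset (Fin k)) := fun i hi =>
      mem_filter.2 ⟨mem_univ _, hP (mem_Iic.1 hi) hPj⟩
    have := card_le_card hsub
    rw [Fin.card_Iic] at this
    omega

end Sorting

section SingularValues

variable {m n : ℕ}

theorem sigRow_eq (A : Matrix (Fin m) (Fin n) ℝ) :
    sigRow A = fun i => √((isHermitian_mul_conjTranspose_self A).eigenvalues
      (Tuple.sort (isHermitian_mul_conjTranspose_self A).eigenvalues i.rev)) :=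
  descSort_comp_of_monotone (fun _ _ => Real.sqrt_le_sqrt) _

theorem sigRow_eq_zero_iff (A : Matrix (Fin m) (Fin n) ℝ) (i : Fin m) :
    sigRow A i = 0 ↔ A.rank ≤ i := by
  classical
  set H := isHermitian_mul_conjTranspose_self A
  have hμ : ∀ j, 0 ≤ H.eigenvalues j := (posSemidef_self_mul_conjTranspose A).eigenvalues_nonneg
  have hσ0 : ∀ j, 0 ≤ sigRow A j := fun _ => Real.sqrt_nonneg _
  have hcard : Fintype.card {j // sigRow A j ≠ 0} = A.rank := by
    rw [← rank_self_mul_conjTranspose, H.rank_eq_card_non_zero_eigs, sigRow_eq]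
    exact Fintype.card_congr ((Fin.revPerm.trans (Tuple.sort H.eigenvalues)).subtypeEquiv
      fun j => (Real.sqrt_eq_zero (hμ _)).not)
  have hlower : ∀ ⦃i j : Fin m⦄, i ≤ j → sigRow A j ≠ 0 → sigRow A i ≠ 0 := fun i j hij hj =>
    ((lt_of_le_of_ne (hσ0 j) (Ne.symm hj)).trans_le (antitone_descSort _ hij)).ne'
  rw [← not_lt, ← hcard, Fin.lt_card_subtype_iff hlower, not_not]

theorem exists_orthonormalBasis_inner_transpose_sigRow (A : Matrix (Fin m) (Fin n) ℝ) :
    ∃ u : OrthonormalBasis (Fin m) ℝ (EuclideanSpace ℝ (Fin m)), ∀ i j,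
      ⟪toEuclideanLin Aᵀ (u i), toEuclideanLin Aᵀ (u j)⟫ = if i = j then sigRow A i ^ 2 else 0 := by
  set H := isHermitian_mul_conjTranspose_self A
  set g := Fin.revPerm.trans (Tuple.sort H.eigenvalues)
  refine ⟨H.eigenvectorBasis.reindex g.symm, fun i j => ?_⟩
  have heig : toEuclideanLin (A * Aᵀ) (H.eigenvectorBasis (g j)) =
      H.eigenvalues (g j) • H.eigenvectorBasis (g j) := by
    rw [toLpLin_apply, ← conjTranspose_eq_transpose_of_trivial, H.mulVec_eigenvectorBasis]
    rfl
  rw [inner_toEuclideanLin_transpose, ← LinearMap.comp_apply, ← toLpLin_mul_same]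
  simp only [OrthonormalBasis.reindex_apply, Equiv.symm_symm]
  rw [heig, inner_smul_right, orthonormal_iff_ite.1 H.eigenvectorBasis.orthonormal, sigRow_eq]
  simp only [g.injective.eq_iff]
  split_ifs with hij
  · subst hij
    exact (mul_one _).trans
      (Real.sq_sqrt ((posSemidef_self_mul_conjTranspose A).eigenvalues_nonneg _)).symm
  · exact mul_zero _

end SingularValues

theorem OrthonormalBasis.map_eq_zero_of_inner_eq_zero {𝕜 ι E F : Type*} [RCLike 𝕜] [Fintype ι]
    [NormedAddCommGroup E] [InnerProductSpace 𝕜 E] [AddCommGroup F] [Module 𝕜 F]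
    (u : OrthonormalBasis ι 𝕜 E) (T : E →ₗ[𝕜] F) {s : Set ι} (hT : ∀ i ∉ s, T (u i) = 0)
    {x : E} (hx : ∀ i ∈ s, inner 𝕜 (u i) x = 0) : T x = 0 := by
  rw [← u.sum_repr' x, map_sum]
  refine sum_eq_zero fun i _ => ?_
  by_cases hi : i ∈ s
  · rw [hx i hi, zero_smul, map_zero]
  · rw [map_smul, hT i hi, smul_zero]

section SingularFrame

variable {m n : ℕ}

theorem exists_singular_frame (A : Matrix (Fin m) (Fin n) ℝ) :
    ∃ (u : OrthonormalBasis (Fin m) ℝ (EuclideanSpace ℝ (Fin m)))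
      (w : Fin A.rank → EuclideanSpace ℝ (Fin n)), Orthonormal ℝ w ∧
      (∀ i, toEuclideanLin Aᵀ (u (Fin.castLE A.rank_le_height i)) =
        sigRow A (Fin.castLE A.rank_le_height i) • w i) ∧
      ∀ x, (∀ i, ⟪u (Fin.castLE A.rank_le_height i), x⟫ = 0) → toEuclideanLin Aᵀ x = 0 := by
  obtain ⟨u, hu⟩ := exists_orthonormalBasis_inner_transpose_sigRow A
  set ι := Fin.castLE A.rank_le_height
  have hι : Injective ι := Fin.castLE_injective _
  have hσ : ∀ i, sigRow A (ι i) ≠ 0 := fun i => (sigRow_eq_zero_iff A _).not.2 (not_le.2 i.isLt)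
  refine ⟨u, fun i => (sigRow A (ι i))⁻¹ • toEuclideanLin Aᵀ (u (ι i)), ?_, fun i => ?_,
    fun x hx => u.map_eq_zero_of_inner_eq_zero _ (s := {i | (i : ℕ) < A.rank}) ?_
      fun i hi => hx ⟨i, hi⟩⟩
  · rw [orthonormal_iff_ite]
    intro i j
    simp only [real_inner_smul_left, real_inner_smul_right, hu, hι.eq_iff]
    split_ifs with hij
    · subst hij
      field_simp [hσ i]
    · simp
  · rw [smul_smul, mul_inv_cancel₀ (hσ i), one_smul]
  · intro i hi
    have := hu i i
    rw [if_pos rfl, (sigRow_eq_zero_iff A i).2 (not_lt.1 hi)] at this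
    simpa using this

end SingularFrame

section Blocks

variable {m n : ℕ}

theorem eq_colMatrix_mul_rdg_mul_transpose {r : ℕ} (hrm : r ≤ m) (hrn : r ≤ n)
    {A : Matrix (Fin m) (Fin n) ℝ} {σ : Fin m → ℝ}
    (eU : OrthonormalBasis (Fin m) ℝ (EuclideanSpace ℝ (Fin m)))
    (eV : OrthonormalBasis (Fin n) ℝ (EuclideanSpace ℝ (Fin n)))
    (hpos : ∀ i : Fin r,
      toEuclideanLin Aᵀ (eU (Fin.castLE hrm i)) = σ (Fin.castLE hrm i) • eV (Fin.castLE hrn i))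
    (hker : ∀ x, (∀ i : Fin r, ⟪eU (Fin.castLE hrm i), x⟫ = 0) → toEuclideanLin Aᵀ x = 0)
    (hσ : ∀ i : Fin m, r ≤ i → σ i = 0) :
    A = colMatrix eU * rdg m n σ * (colMatrix eV)ᵀ := by
  have hdiag : (colMatrix eU)ᵀ * A * colMatrix eV = rdg m n σ := by
    ext i j
    rw [colMatrix_transpose_mul_mul_apply, ← inner_toEuclideanLin_transpose]
    by_cases hi : (i : ℕ) < r
    · rw [show i = Fin.castLE hrm ⟨i, hi⟩ from rfl, hpos, real_inner_smul_left,
        orthonormal_iff_ite.1 eV.orthonormal]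
      simp [rdg, Fin.ext_iff]
    · have hzero : toEuclideanLin Aᵀ (eU i) = 0 := hker _ fun l =>
        (orthonormal_iff_ite.1 eU.orthonormal _ _).trans
          (if_neg fun h => hi (by rw [← h]; exact l.isLt))
      simp [hzero, rdg, hσ i (not_lt.1 hi)]
  nth_rewrite 1 [eq_mul_transpose_mul_mul_mul_transpose (isOrth_colMatrix eU)
    (isOrth_colMatrix eV) A]
  rw [hdiag]

theorem exists_block_eq_colMatrix_mul {k : ℕ} (hkm : k ≤ m) (hkn : k ≤ n)
    (B : Matrix (Fin m) (Fin n) ℝ) (eU : OrthonormalBasis (Fin m) ℝ (EuclideanSpace ℝ (Fin m)))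
    (eV : OrthonormalBasis (Fin n) ℝ (EuclideanSpace ℝ (Fin n)))
    (hU : ∀ i : Fin m, k ≤ i → eU i ∈ (LinearMap.range (toEuclideanLin B))ᗮ)
    (hV : ∀ j : Fin n, k ≤ j → eV j ∈ (LinearMap.range (toEuclideanLin Bᵀ))ᗮ) :
    ∃ B1 : Matrix (Fin k) (Fin k) ℝ,
      B = colMatrix eU * (Matrix.of fun (i : Fin m) (j : Fin n) =>
        if hij : (i : ℕ) < k ∧ (j : ℕ) < k then B1 ⟨i, hij.1⟩ ⟨j, hij.2⟩ else 0) *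
          (colMatrix eV)ᵀ := by
  set C := (colMatrix eU)ᵀ * B * colMatrix eV
  refine ⟨Matrix.of fun i j => C (Fin.castLE hkm i) (Fin.castLE hkn j), ?_⟩
  nth_rewrite 1 [eq_mul_transpose_mul_mul_mul_transpose (isOrth_colMatrix eU)
    (isOrth_colMatrix eV) B]
  congr 2
  ext i j
  by_cases hij : (i : ℕ) < k ∧ (j : ℕ) < k
  · rw [of_apply, dif_pos hij]
    rfl
  · rw [of_apply, dif_neg hij, colMatrix_transpose_mul_mul_apply]
    rcases not_and_or.1 hij with hi | hj
    · exact Submodule.inner_left_of_mem_orthogonal (LinearMap.mem_range_self _ _)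
        (hU i (not_lt.1 hi))
    · rw [← inner_toEuclideanLin_transpose]
      exact Submodule.inner_right_of_mem_orthogonal (LinearMap.mem_range_self _ _)
        (hV j (not_lt.1 hj))

end Blocks

theorem simultaneous_block_decomposition (m n k : ℕ) (hk : k ≤ min m n)
    (A B : Matrix (Fin m) (Fin n) ℝ) (hrk : A.rank + B.rank = k) :
    ∃ (U : Matrix (Fin m) (Fin m) ℝ) (V : Matrix (Fin n) (Fin n) ℝ),
      IsOrth U ∧ IsOrth V ∧
      A = U * rdg m n (sigRow A) * Vᵀ ∧
      ∃ B1 : Matrix (Fin k) (Fin k) ℝ,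
        B = U * (Matrix.of fun (i : Fin m) (j : Fin n) =>
              if hij : (i : ℕ) < k ∧ (j : ℕ) < k then B1 ⟨i, hij.1⟩ ⟨j, hij.2⟩ else 0) * Vᵀ := by
  have hkm : k ≤ m := hk.trans (min_le_left _ _)
  have hkn : k ≤ n := hk.trans (min_le_right _ _)
  have hr : A.rank ≤ k := by omega
  obtain ⟨u, w, hw, huw, hker⟩ := exists_singular_frame A
  set u₀ := fun i => u (Fin.castLE A.rank_le_height i)
  obtain ⟨eU, heU, heU_perp⟩ := exists_orthonormalBasis_extension_orthogonal
    finrank_euclideanSpace_fin hr hkm (u.orthonormal.comp _ (Fin.castLE_injective _))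
    (S := Submodule.span ℝ (Set.range u₀) ⊔ LinearMap.range (toEuclideanLin B))
    (fun i => Submodule.mem_sup_left (Submodule.subset_span ⟨i, rfl⟩))
    (by have := finrank_span_sup_range_toEuclideanLin_le u₀ B; omega)
  obtain ⟨eV, heV, heV_perp⟩ := exists_orthonormalBasis_extension_orthogonal
    finrank_euclideanSpace_fin hr hkn hw
    (S := Submodule.span ℝ (Set.range w) ⊔ LinearMap.range (toEuclideanLin Bᵀ))
    (fun i => Submodule.mem_sup_left (Submodule.subset_span ⟨i, rfl⟩))
    (by have := finrank_span_sup_range_toEuclideanLin_le w Bᵀ; rw [rank_transpose] at this; omega)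
  refine ⟨colMatrix eU, colMatrix eV, isOrth_colMatrix eU, isOrth_colMatrix eV,
    eq_colMatrix_mul_rdg_mul_transpose (hr.trans hkm) (hr.trans hkn) eU eV
      (fun i => by rw [heU, heV]; exact huw i)
      (fun x hx => hker x fun i => by simpa [heU] using hx i)
      (fun i hi => (sigRow_eq_zero_iff A i).2 hi),
    exists_block_eq_colMatrix_mul hkm hkn B eU eV
      (fun i hi => Submodule.orthogonal_le le_sup_right (heU_perp i hi))
      (fun j hj => Submodule.orthogonal_le le_sup_right (heV_perp j hj))⟩
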